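/- arXiv:0912.5472 — 3 statements merged into one kernel-verified Lean document; each statement's English description precedes it below -/
import Mathlib

section
/- Let g be a finite-dimensional real simple Lie algebra whose Killing form is negative definite, and suppose A ∈ End(g) satisfies [A U, X] + [A X, U] = 0 for all U, X ∈ g. Then A = c·id for some c ∈ ℝ. -/
/-!
Rewriting the hypothesis as `⁅A X, Z⁆ = ⁅X, A Z⁆` gives `ad (A X) = ad X ∘ A`. As `ad` of a simple
Lie algebra takes values in traceless maps, a cyclic-trace computation then shows that `A` is
self-adjoint for the Killing form `κ`. Since `-κ` is an inner product, `A` has a real eigenvalue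
`c`. The map `A - c` has the same two properties, and invariance plus nondegeneracy of `κ` make its
kernel a nonzero ideal, hence all of `g`.
-/

open LieAlgebra

/-- The inner product `⟨X,Y⟩ = -κ(X,Y)`, the negative of the Killing form. -/
noncomputable def ip (R : Type*) (g : Type*) [CommRing R] [LieRing g] [LieAlgebra R g]
    (X Y : g) : R :=
  - killingForm R g X Y

/-- The endomorphism `X ∧ Y : Z ↦ ⟨X,Z⟩Y - ⟨Y,Z⟩X`, where `⟨·,·⟩ = -κ(·,·)`. -/
noncomputable def wedge (R : Type*) (g : Type*) [CommRing R] [LieRing g] [LieAlgebra R g]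
    (X Y : g) : Module.End R g :=
  (-(killingForm R g X)).smulRight Y - (-(killingForm R g Y)).smulRight X

open LieModule

lemma Module.End.exists_hasEigenvalue_of_isSelfAdjoint {V : Type*} [AddCommGroup V] [Module ℝ V]
    [FiniteDimensional ℝ V] [Nontrivial V] {B : LinearMap.BilinForm ℝ V} (hB : B.IsSymm)
    (hBpos : ∀ x, x ≠ 0 → 0 < B x x) {A : Module.End ℝ V} (hA : B.IsSelfAdjoint A) :
    ∃ c, A.HasEigenvalue c := by
  let core : InnerProductSpace.Core ℝ V :=
    { inner x y := B x y
      conj_inner_symm x y := hB.eq y x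
      re_inner_nonneg x := by
        rcases eq_or_ne x 0 with rfl | hx
        · simp
        · exact (hBpos x hx).le
      add_left x y z := by simp
      smul_left x y r := by simp
      definite x hx := by
        by_contra h
        exact (hBpos x h).ne' hx }
  let _ : NormedAddCommGroup V := core.toNormedAddCommGroup
  let _ : InnerProductSpace ℝ V := InnerProductSpace.ofCore core.toCore
  exact ⟨_, LinearMap.IsSymmetric.hasEigenvalue_iSup_of_finiteDimensional (T := A) hA⟩

namespace LieAlgebra

variable {R L : Type*} [CommRing R] [LieRing L] [LieAlgebra R L]

lemma ad_lie_eq_mul_sub_mul (x y : L) :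
    ad R L ⁅x, y⁆ = ad R L x * ad R L y - ad R L y * ad R L x :=
  LinearMap.ext (lie_lie x y)

variable {A : Module.End R L}

lemma ad_apply_eq_ad_mul (hA : ∀ X Z : L, ⁅A X, Z⁆ = ⁅X, A Z⁆) (X : L) :
    ad R L (A X) = ad R L X * A :=
  LinearMap.ext (hA X)

lemma apply_lie_eq_zero_of_apply_eq_zero [Module.Free R L] [Module.Finite R L]
    (hκ : (killingForm R L).SeparatingLeft) (hA : ∀ X Z : L, ⁅A X, Z⁆ = ⁅X, A Z⁆)
    (hAκ : (killingForm R L).IsSelfAdjoint A) {m : L} (hm : A m = 0) (x : L) :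
    A ⁅x, m⁆ = 0 :=
  hκ _ fun z ↦ by
    rw [hAκ, traceForm_apply_lie_apply, ← hA m z, hm, zero_lie, map_zero]

namespace IsSimple

variable [IsSimple R L]

variable (R L) in
lemma lowerCentralSeries_one_eq_top : lowerCentralSeries R L L 1 = ⊤ :=
  (eq_bot_or_eq_top _).resolve_left fun h ↦
    non_abelian R ((trivial_iff_lower_central_eq_bot R L L).mpr h)

lemma trace_ad_eq_zero [Module.Free R L] [Module.Finite R L] (x : L) :
    LinearMap.trace R L (ad R L x) = 0 :=
  trace_toEnd_eq_zero_of_mem_lcs R L L le_rfl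
    ((lowerCentralSeries_one_eq_top R L).symm ▸ LieSubmodule.mem_top x)

open LinearMap in
lemma killingForm_isSelfAdjoint [Module.Free R L] [Module.Finite R L]
    (hA : ∀ X Z : L, ⁅A X, Z⁆ = ⁅X, A Z⁆) : (killingForm R L).IsSelfAdjoint A := by
  intro x y
  set a := ad R L x
  set b := ad R L y
  -- `A * ⁅b, a⁆` is a cyclic permutation of `ad (A ⁅y, x⁆)`, so it is traceless
  have hcomm : trace R L (A * (b * a)) = trace R L (A * (a * b)) := by
    have h := trace_ad_eq_zero (R := R) (A ⁅y, x⁆)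
    rwa [ad_apply_eq_ad_mul hA, trace_mul_comm, ad_lie_eq_mul_sub_mul, mul_sub, map_sub,
      sub_eq_zero] at h
  calc killingForm R L (A x) y = trace R L (a * A * b) := by
        rw [killingForm_apply_apply, ad_apply_eq_ad_mul hA]; rfl
    _ = trace R L (A * (b * a)) := by rw [mul_assoc, trace_mul_comm, mul_assoc]
    _ = trace R L (A * (a * b)) := hcomm
    _ = trace R L (a * (b * A)) := by rw [trace_mul_comm, mul_assoc]
    _ = killingForm R L x (A y) := by rw [killingForm_apply_apply, ad_apply_eq_ad_mul hA]; rfl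

lemma eq_zero_of_ker_ne_bot [Module.Free R L] [Module.Finite R L]
    (hκ : (killingForm R L).SeparatingLeft) (hA : ∀ X Z : L, ⁅A X, Z⁆ = ⁅X, A Z⁆)
    (hAκ : (killingForm R L).IsSelfAdjoint A) (hker : LinearMap.ker A ≠ ⊥) : A = 0 := by
  let I : LieIdeal R L :=
    { LinearMap.ker A with
      lie_mem := fun {x _} hm ↦ apply_lie_eq_zero_of_apply_eq_zero hκ hA hAκ hm x }
  have hI : I = ⊤ := (eq_bot_or_eq_top I).resolve_left fun h ↦ hker <| by
    simpa [I] using congrArg LieSubmodule.toSubmodule h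
  ext x
  exact LinearMap.mem_ker.mp (hI ▸ LieSubmodule.mem_top x : x ∈ I)

lemma eq_smul_id_of_hasEigenvalue [Module.Free R L] [Module.Finite R L]
    (hκ : (killingForm R L).SeparatingLeft) (hA : ∀ X Z : L, ⁅A X, Z⁆ = ⁅X, A Z⁆)
    (hAκ : (killingForm R L).IsSelfAdjoint A) {c : R} (hc : A.HasEigenvalue c) :
    A = c • LinearMap.id := by
  refine sub_eq_zero.mp (eq_zero_of_ker_ne_bot hκ (fun X Z ↦ ?_)
    (hAκ.sub (LinearMap.isAdjointPair_id.smul c)) ?_)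
  · simp [sub_lie, lie_sub, smul_lie, lie_smul, hA]
  · simpa [Module.End.hasEigenvalue_iff, Module.End.eigenspace_def, Module.End.one_eq_id] using hc

end IsSimple

end LieAlgebra

theorem stmt_5 (g : Type*) [LieRing g] [LieAlgebra ℝ g] [Module.Finite ℝ g]
    [LieAlgebra.IsSimple ℝ g]
    (hneg : ∀ X : g, X ≠ 0 → killingForm ℝ g X X < 0)
    (A : Module.End ℝ g)
    (hA : ∀ U X : g, ⁅A U, X⁆ + ⁅A X, U⁆ = 0) :
    ∃ c : ℝ, A = c • LinearMap.id := by
  have hA' : ∀ X Z : g, ⁅A X, Z⁆ = ⁅X, A Z⁆ := fun X Z ↦ by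
    rw [eq_neg_of_add_eq_zero_left (hA X Z), lie_skew]
  have hAκ := IsSimple.killingForm_isSelfAdjoint hA'
  have hκ : (killingForm ℝ g).SeparatingLeft := fun x hx ↦
    by_contra fun h ↦ (hneg x h).ne (hx x)
  have := IsSimple.nontrivial ℝ (L := g)
  obtain ⟨c, hc⟩ := Module.End.exists_hasEigenvalue_of_isSelfAdjoint (B := -killingForm ℝ g)
    ⟨fun x y ↦ congrArg Neg.neg (traceForm_comm ℝ g g x y)⟩ (fun x hx ↦ neg_pos.mpr (hneg x hx))
    (fun x y ↦ congrArg Neg.neg (hAκ x y))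
  exact ⟨c, IsSimple.eq_smul_id_of_hasEigenvalue hκ hA' hAκ hc⟩
end

section
/- Under the hypotheses of the Proposition (dim g > 4, K and Φ satisfying (i) and (ii)) together with the condition Tr(K_Z ∘ ad_U) = 0 for all Z,U ∈ g, one has the cyclic identity σ_{XYZ}[K_X Y − K_Y X + 2Φ(X,Y), Z] = 0 for all X,Y,Z ∈ g. -/
open LieAlgebra

/-!
Compose condition (ii) with `ad U` and take traces. The `K`-terms drop out: by invariance of
the trace, `tr([ad V, K_Z] ∘ ad U) = tr(K_Z ∘ ad [U, V])`, which vanishes by the trace condition.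
What remains is `κ(W, U)`, where `W` is the cyclic sum in question, because
`tr(ad A ∘ ad U) = κ(A, U)` and `tr((A ∧ B) ∘ ad U) = 2 κ([A, B], U)`.
As `U` is arbitrary and `κ` is definite, `W = 0`.
-/

open LinearMap (trace)

section TraceAgainstAd

variable {R L : Type*} [CommRing R] [LieRing L] [LieAlgebra R L]

lemma trace_lie_ad_comp_ad (T : Module.End R L) (V U : L) :
    trace R L (⁅ad R L V, T⁆ ∘ₗ ad R L U) = trace R L (T ∘ₗ ad R L ⁅U, V⁆) := by
  have had : ad R L ⁅U, V⁆ = ⁅ad R L U, ad R L V⁆ := by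
    ext W; simp [Ring.lie_def]
  rw [had, ← Module.End.mul_eq_comp, ← Module.End.mul_eq_comp]
  simp only [Ring.lie_def, sub_mul, mul_sub, map_sub, mul_assoc]
  rw [LinearMap.trace_mul_comm _ (ad R L V), mul_assoc]

variable [Module.Free R L] [Module.Finite R L]

lemma trace_wedge_comp_ad (A B U : L) :
    trace R L (wedge R L A B ∘ₗ ad R L U) = 2 * killingForm R L ⁅A, B⁆ U := by
  have h₁ : killingForm R L A ⁅U, B⁆ = -killingForm R L ⁅A, B⁆ U := by
    rw [← lie_skew, map_neg, LieModule.traceForm_apply_lie_apply]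
  have h₂ : killingForm R L B ⁅U, A⁆ = killingForm R L ⁅A, B⁆ U := by
    rw [← LieModule.traceForm_apply_lie_apply, LieModule.traceForm_comm,
      LieModule.traceForm_apply_lie_apply]
  have hcomp : ∀ (f : L →ₗ[R] R) (x : L),
      f.smulRight x ∘ₗ ad R L U = (f ∘ₗ ad R L U).smulRight x := fun _ _ => rfl
  simp only [wedge, LinearMap.sub_comp, map_sub, hcomp, LinearMap.trace_smulRight,
    LinearMap.comp_apply, LinearMap.neg_apply, ad_apply, h₁, h₂]
  ring

lemma trace_comp_ad_eq_killingForm (T : Module.End R L)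
    (hT : ∀ W : L, trace R L (T ∘ₗ ad R L W) = 0) (V C B Z U : L) :
    trace R L ((⁅ad R L V, T⁆ + ad R L ⁅C, Z⁆ + wedge R L B Z) ∘ₗ ad R L U)
      = killingForm R L ⁅C + (2 : R) • B, Z⁆ U := by
  rw [LinearMap.add_comp, LinearMap.add_comp, map_add, map_add, trace_lie_ad_comp_ad, hT,
    trace_wedge_comp_ad, ← killingForm_apply_apply]
  simp only [add_lie, smul_lie, map_add, map_smul, LinearMap.add_apply, LinearMap.smul_apply,
    smul_eq_mul]
  ring

end TraceAgainstAd

theorem stmt_6_general (g : Type*) [LieRing g] [LieAlgebra ℝ g] [Module.Finite ℝ g]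
    (hneg : ∀ X : g, X ≠ 0 → killingForm ℝ g X X < 0)
    (K : g →ₗ[ℝ] Module.End ℝ g)
    (htr : ∀ Z U : g, LinearMap.trace ℝ g (K Z ∘ₗ ad ℝ g U) = 0)
    (Φ : g →ₗ[ℝ] g →ₗ[ℝ] g)
    (hii : ∀ X Y Z : g,
      (⁅ad ℝ g ⁅X, Y⁆, K Z⁆ + ad ℝ g ⁅K X Y - K Y X, Z⁆ + wedge ℝ g (Φ X Y) Z)
      + (⁅ad ℝ g ⁅Y, Z⁆, K X⁆ + ad ℝ g ⁅K Y Z - K Z Y, X⁆ + wedge ℝ g (Φ Y Z) X)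
      + (⁅ad ℝ g ⁅Z, X⁆, K Y⁆ + ad ℝ g ⁅K Z X - K X Z, Y⁆ + wedge ℝ g (Φ Z X) Y) = 0)
    :
    ∀ X Y Z : g,
      ⁅K X Y - K Y X + (2 : ℝ) • Φ X Y, Z⁆
      + ⁅K Y Z - K Z Y + (2 : ℝ) • Φ Y Z, X⁆
      + ⁅K Z X - K X Z + (2 : ℝ) • Φ Z X, Y⁆ = 0 := by
  intro X Y Z
  set W := ⁅K X Y - K Y X + (2 : ℝ) • Φ X Y, Z⁆ + ⁅K Y Z - K Z Y + (2 : ℝ) • Φ Y Z, X⁆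
    + ⁅K Z X - K X Z + (2 : ℝ) • Φ Z X, Y⁆
  have hW : ∀ U : g, killingForm ℝ g W U = 0 := fun U => by
    have h := congrArg (fun T => trace ℝ g (T ∘ₗ ad ℝ g U)) (hii X Y Z)
    rw [LinearMap.add_comp, LinearMap.add_comp, map_add, map_add, LinearMap.zero_comp, map_zero,
      trace_comp_ad_eq_killingForm _ (htr Z), trace_comp_ad_eq_killingForm _ (htr X),
      trace_comp_ad_eq_killingForm _ (htr Y)] at h
    simpa only [W, map_add, LinearMap.add_apply] using h
  by_contra hne
  exact (hneg W hne).ne (hW W)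

theorem stmt_6 (g : Type*) [LieRing g] [LieAlgebra ℝ g] [Module.Finite ℝ g]
    [LieAlgebra.IsSimple ℝ g]
    (hneg : ∀ X : g, X ≠ 0 → killingForm ℝ g X X < 0)
    (hdim : 4 < Module.finrank ℝ g)
    (K : g →ₗ[ℝ] Module.End ℝ g)
    (hskew : ∀ Z X Y : g, ip ℝ g (K Z X) Y + ip ℝ g X (K Z Y) = 0)
    (htr : ∀ Z U : g, LinearMap.trace ℝ g (K Z ∘ₗ ad ℝ g U) = 0)
    (Φ : g →ₗ[ℝ] g →ₗ[ℝ] g)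
    (hΦalt : ∀ X : g, Φ X X = 0)
    (hi : ∀ X Y Z : g, ip ℝ g (Φ X Y) Z + ip ℝ g (Φ Y Z) X + ip ℝ g (Φ Z X) Y = 0)
    (hii : ∀ X Y Z : g,
      (⁅ad ℝ g ⁅X, Y⁆, K Z⁆ + ad ℝ g ⁅K X Y - K Y X, Z⁆ + wedge ℝ g (Φ X Y) Z)
      + (⁅ad ℝ g ⁅Y, Z⁆, K X⁆ + ad ℝ g ⁅K Y Z - K Z Y, X⁆ + wedge ℝ g (Φ Y Z) X)
      + (⁅ad ℝ g ⁅Z, X⁆, K Y⁆ + ad ℝ g ⁅K Z X - K X Z, Y⁆ + wedge ℝ g (Φ Z X) Y) = 0)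
    :
    ∀ X Y Z : g,
      ⁅K X Y - K Y X + (2 : ℝ) • Φ X Y, Z⁆
      + ⁅K Y Z - K Z Y + (2 : ℝ) • Φ Y Z, X⁆
      + ⁅K Z X - K X Z + (2 : ℝ) • Φ Z X, Y⁆ = 0 :=
  stmt_6_general g hneg K htr Φ hii
end

section
/- Let V be a finite-dimensional complex vector space with dim V ≥ 3, and let Φ : V × V → V be an alternating bilinear map such that Φ(X,Y) ∈ span{X,Y} for all X, Y ∈ V. Then there exists a linear functional p on V such that Φ(X,Y) = p(X)Y − p(Y)X for all X, Y ∈ V. -/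
/-!
For fixed `X`, the map `Φ X` induces on `V ⧸ span {X}` an endomorphism for which every vector
is an eigenvector, so it is a scalar `q X`: thus `Φ X Y = q X • Y + a • X`. For `X`, `Y`
independent, comparing this with the same expansion of `Φ Y X = -Φ X Y` forces `a = -q Y`.
Testing against a vector `Z` outside `span {X, Y}`, which exists as `dim V ≥ 3`, shows that `q`
is linear.
-/

open Submodule Module

section

variable {K V : Type*} [Field K] [AddCommGroup V] [Module K V]

theorem LinearMap.exists_forall_sub_smul_mem_span_singleton {f : V →ₗ[K] V} {X : V}
    (hf : ∀ Y, f Y ∈ span K {X, Y}) : ∃ c : K, ∀ Y, f Y - c • Y ∈ span K {X} := by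
  set S := span K {X}
  have hS : S ≤ S.comap f := span_le.mpr <| by simpa [S] using hf X
  obtain ⟨c, hc⟩ := (S.mapQ S f hS).exists_eq_smul_id_of_forall_notLinearIndependent <| by
    intro v hind
    obtain ⟨Y, rfl⟩ := S.mkQ_surjective v
    have hX : S.mkQ X = 0 := (Quotient.mk_eq_zero S).mpr (mem_span_singleton_self X)
    have hY := mem_map_of_mem (f := S.mkQ) (hf Y)
    rw [map_span, Set.image_pair, hX, span_insert_zero] at hY
    obtain ⟨c, hc⟩ := mem_span_singleton.mp hY
    have := LinearIndependent.pair_iff.mp hind c (-1)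
      (by simpa [sub_eq_zero, ← sub_eq_add_neg] using hc)
    simp at this
  refine ⟨c, fun Y => (Quotient.mk_eq_zero S).mp ?_⟩
  simpa [sub_eq_zero] using LinearMap.congr_fun hc (S.mkQ Y)

theorem exists_notMem_span_pair (h : 2 < finrank K V) (X Y : V) : ∃ Z, Z ∉ span K {X, Y} := by
  classical
  by_contra! hXY
  have := finrank_span_finset_le_card (R := K) ({X, Y} : Finset V)
  rw [Set.finrank, Finset.coe_pair, eq_top_iff'.mpr hXY, finrank_top] at this
  have := Finset.card_le_two (a := X) (b := Y)
  omega

variable {Φ : V →ₗ[K] V →ₗ[K] V} {q : V → K}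

theorem apply_eq_smul_sub_smul_of_notMem_span (hΦ : Φ.IsAlt)
    (hq : ∀ X Y, Φ X Y - q X • Y ∈ span K {X}) {X Z : V} (hZ : Z ∉ span K {X}) :
    Φ X Z = q X • Z - q Z • X := by
  obtain ⟨a, ha⟩ := mem_span_singleton.mp (hq X Z)
  obtain ⟨b, hb⟩ := mem_span_singleton.mp (hq Z X)
  have hskew := hΦ.neg X Z
  have hqb : q X + b = 0 := by
    by_contra hne
    refine hZ ((smul_mem_iff _ hne).mp ?_)
    rw [show (q X + b) • Z = -(a + q Z) • X by linear_combination (norm := module) ha + hb - hskew]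
    exact smul_mem _ _ (mem_span_singleton_self X)
  linear_combination (norm := module) hb - hskew - hqb • Z

theorem map_add_of_notMem_span_pair (hΦ : Φ.IsAlt)
    (hq : ∀ X Y, Φ X Y - q X • Y ∈ span K {X}) {X Y Z : V} (hZ : Z ∉ span K {X, Y}) :
    q (X + Y) = q X + q Y := by
  have hZ0 : Z ≠ 0 := fun h => hZ (h ▸ zero_mem _)
  have hle : ∀ W ∈ span K {X, Y}, Z ∉ span K {W} := fun W hW hZW =>
    hZ (span_le.mpr (Set.singleton_subset_iff.mpr hW) hZW)
  have hX := apply_eq_smul_sub_smul_of_notMem_span hΦ hq (hle X (subset_span (by simp)))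
  have hY := apply_eq_smul_sub_smul_of_notMem_span hΦ hq (hle Y (subset_span (by simp)))
  have hXY := apply_eq_smul_sub_smul_of_notMem_span hΦ hq
    (hle (X + Y) (add_mem (subset_span (by simp)) (subset_span (by simp))))
  apply smul_left_injective K hZ0
  linear_combination (norm := module) Φ.map_add₂ X Y Z - hXY + hX + hY

theorem map_smul_of_notMem_span (hΦ : Φ.IsAlt)
    (hq : ∀ X Y, Φ X Y - q X • Y ∈ span K {X}) (t : K) {X Z : V} (hZ : Z ∉ span K {X}) :
    q (t • X) = t * q X := by
  have hZ0 : Z ≠ 0 := fun h => hZ (h ▸ zero_mem _)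
  have hX := apply_eq_smul_sub_smul_of_notMem_span hΦ hq hZ
  have htX := apply_eq_smul_sub_smul_of_notMem_span hΦ hq
    (fun h => hZ (span_singleton_smul_le K t X h))
  apply smul_left_injective K hZ0
  linear_combination (norm := module) Φ.map_smul₂ t X Z - htX + t • hX

end

theorem stmt_18_general (V : Type*) [AddCommGroup V] [Module ℂ V]
    (hdim : 3 ≤ Module.finrank ℂ V)
    (Φ : V →ₗ[ℂ] V →ₗ[ℂ] V)
    (hΦalt : ∀ X : V, Φ X X = 0)
    (hspan : ∀ X Y : V, Φ X Y ∈ Submodule.span ℂ ({X, Y} : Set V)) :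
    ∃ p : Module.Dual ℂ V, ∀ X Y : V, Φ X Y = p X • Y - p Y • X := by
  choose q hq using fun X => (Φ X).exists_forall_sub_smul_mem_span_singleton (hspan X)
  have hZ := exists_notMem_span_pair (K := ℂ) (V := V) hdim
  let p : Module.Dual ℂ V :=
    { toFun := q
      map_add' X Y := map_add_of_notMem_span_pair hΦalt hq (hZ X Y).choose_spec
      map_smul' t X := map_smul_of_notMem_span hΦalt hq t (by simpa using (hZ X X).choose_spec) }
  refine ⟨p, fun X Y => ?_⟩
  by_cases hY : Y ∈ span ℂ {X}
  · obtain ⟨t, rfl⟩ := mem_span_singleton.mp hY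
    simp [hΦalt, smul_smul, mul_comm]
  · exact apply_eq_smul_sub_smul_of_notMem_span hΦalt hq hY

theorem stmt_18 (V : Type*) [AddCommGroup V] [Module ℂ V] [FiniteDimensional ℂ V]
    (hdim : 3 ≤ Module.finrank ℂ V)
    (Φ : V →ₗ[ℂ] V →ₗ[ℂ] V)
    (hΦalt : ∀ X : V, Φ X X = 0)
    (hspan : ∀ X Y : V, Φ X Y ∈ Submodule.span ℂ ({X, Y} : Set V)) :
    ∃ p : Module.Dual ℂ V, ∀ X Y : V, Φ X Y = p X • Y - p Y • X :=
  stmt_18_general V hdim Φ hΦalt hspan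
end
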